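/- arXiv:2106.09815 — 5 statements merged into one kernel-verified Lean document; each statement's English description precedes it below -/
import Mathlib

section
/- Let g : R^d → R be differentiable with L-Lipschitz gradient, let G : R^d → R^d satisfy ‖G(x) - ∇g(x)‖ ≤ a‖∇g(x)‖ + b for all x with a ≤ 1/20, and let η ≤ 1/L. Then for the iteration y_{t+1} = y_t - η·G(y_t) starting from y_0, for every t ≥ 0 one has g(y_t) - g(y_0) ≤ -(η(1-a)/8)·Σ_{i=0}^{t-1} ‖∇g(y_i)‖² + 5tηb². -/
/-! Along the segment `s ↦ x + s • v` the `L`-Lipschitz gradient gives the quadratic upper bound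
`f (x + v) ≤ f x + ⟪∇f x, v⟫ + L/2 ‖v‖²`. For the step `v = -η • u` with `η L ≤ 1` the identity
`-⟪w, u⟫ + ‖u‖²/2 = (‖u - w‖² - ‖w‖²)/2` turns this into
`f (x - η • u) - f x ≤ η/2 (‖u - ∇f x‖² - ‖∇f x‖²)`. The oracle gives
`‖u - ∇f x‖² ≤ 2a²‖∇f x‖² + 2b²`, and `a ≤ 1/20` makes `a² - 1/2 ≤ -(1 - a)/8`, so each step
decreases `f` by `η(1 - a)/8 ‖∇f x‖²` up to `5ηb²`; these per-step bounds telescope. -/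

open Finset
open scoped InnerProductSpace

theorem sub_le_sum_of_forall_succ_sub_le {α : Type*} [AddCommGroup α] [PartialOrder α]
    [IsOrderedAddMonoid α] {u c : ℕ → α} (h : ∀ i, u (i + 1) - u i ≤ c i) (t : ℕ) :
    u t - u 0 ≤ ∑ i ∈ range t, c i := by
  rw [← sum_range_sub]
  exact sum_le_sum fun i _ => h i

section LipschitzGradient

variable {E : Type*} [NormedAddCommGroup E] [InnerProductSpace ℝ E] [CompleteSpace E]
  {f : E → ℝ} {f' : E → E} {L : ℝ}

theorem le_add_inner_add_of_lipschitz_gradient (hf : ∀ x, HasGradientAt f (f' x) x)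
    (hLip : ∀ x y, ‖f' x - f' y‖ ≤ L * ‖x - y‖) (x v : E) :
    f (x + v) ≤ f x + ⟪f' x, v⟫_ℝ + L / 2 * ‖v‖ ^ 2 := by
  set φ : ℝ → ℝ := fun s => f (x + s • v) - s * ⟪f' x, v⟫_ℝ - L / 2 * s ^ 2 * ‖v‖ ^ 2
  have hφ : ∀ s, HasDerivAt φ (⟪f' (x + s • v) - f' x, v⟫_ℝ - L * s * ‖v‖ ^ 2) s := by
    intro s
    have hline : HasDerivAt (fun s : ℝ => x + s • v) v s := by
      simpa using ((hasDerivAt_id s).smul_const v).const_add x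
    have hcomp := (hf (x + s • v)).hasFDerivAt.comp_hasDerivAt s hline
    refine ((hcomp.sub (hasDerivAt_mul_const ⟪f' x, v⟫_ℝ)).sub
      (((hasDerivAt_pow 2 s).const_mul (L / 2)).mul_const (‖v‖ ^ 2))).congr_deriv ?_
    rw [InnerProductSpace.toDual_apply_apply, inner_sub_left]
    push_cast
    ring
  have hφ_nonpos : ∀ s ≥ 0, ⟪f' (x + s • v) - f' x, v⟫_ℝ - L * s * ‖v‖ ^ 2 ≤ 0 := by
    intro s hs
    have := calc ⟪f' (x + s • v) - f' x, v⟫_ℝ ≤ ‖f' (x + s • v) - f' x‖ * ‖v‖ :=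
          real_inner_le_norm _ _
      _ ≤ L * ‖x + s • v - x‖ * ‖v‖ := by gcongr; exact hLip _ _
      _ = L * s * ‖v‖ ^ 2 := by
          rw [add_sub_cancel_left, norm_smul, Real.norm_of_nonneg hs]; ring
    linarith
  have hanti : AntitoneOn φ (Set.Ici 0) :=
    antitoneOn_of_hasDerivWithinAt_nonpos (convex_Ici 0)
      (fun s _ => (hφ s).continuousAt.continuousWithinAt)
      (fun s _ => (hφ s).hasDerivWithinAt)
      (fun s hs => hφ_nonpos s (interior_subset hs))
  have := hanti Set.self_mem_Ici (Set.mem_Ici.2 zero_le_one) zero_le_one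
  simp only [φ, one_smul, zero_smul, add_zero] at this
  linarith

theorem sub_smul_le_of_lipschitz_gradient (hf : ∀ x, HasGradientAt f (f' x) x)
    (hLip : ∀ x y, ‖f' x - f' y‖ ≤ L * ‖x - y‖) {η : ℝ} (hη : 0 ≤ η) (hηL : η * L ≤ 1)
    (x u : E) : f (x - η • u) - f x ≤ η / 2 * (‖u - f' x‖ ^ 2 - ‖f' x‖ ^ 2) := by
  have hdescent := le_add_inner_add_of_lipschitz_gradient hf hLip x (-(η • u))
  rw [← sub_eq_add_neg, inner_neg_right, inner_smul_right, norm_neg, norm_smul,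
    Real.norm_of_nonneg hη] at hdescent
  have hquadratic : L / 2 * (η * ‖u‖) ^ 2 ≤ η / 2 * ‖u‖ ^ 2 := by
    have : η * (η * L) ≤ η := mul_le_of_le_one_right hη hηL
    nlinarith [sq_nonneg ‖u‖]
  rw [norm_sub_sq_real, real_inner_comm]
  linarith

theorem sub_smul_le_of_inexact_gradient (hf : ∀ x, HasGradientAt f (f' x) x)
    (hLip : ∀ x y, ‖f' x - f' y‖ ≤ L * ‖x - y‖) {η a b : ℝ} (hη : 0 ≤ η) (hηL : η * L ≤ 1)
    (ha0 : 0 ≤ a) (ha : a ≤ 1 / 20) {x u : E} (hu : ‖u - f' x‖ ≤ a * ‖f' x‖ + b) :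
    f (x - η • u) - f x ≤ -(η * (1 - a) / 8) * ‖f' x‖ ^ 2 + 5 * η * b ^ 2 := by
  have herr : ‖u - f' x‖ ^ 2 ≤ 2 * a ^ 2 * ‖f' x‖ ^ 2 + 2 * b ^ 2 := by
    nlinarith [norm_nonneg (u - f' x), sq_nonneg (a * ‖f' x‖ - b)]
  have ha_quad : a ^ 2 - 1 / 2 ≤ -((1 - a) / 8) := by nlinarith
  have := sub_smul_le_of_lipschitz_gradient hf hLip hη hηL x u
  nlinarith [mul_nonneg hη (sq_nonneg ‖f' x‖), mul_nonneg hη (sq_nonneg b)]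

end LipschitzGradient

theorem inexact_descent_lemma_general {d : ℕ}
    (g : EuclideanSpace ℝ (Fin d) → ℝ) (g' G : EuclideanSpace ℝ (Fin d) → EuclideanSpace ℝ (Fin d))
    (L a b η : ℝ) (hL : 0 < L)
    (hgrad : ∀ x, HasGradientAt g (g' x) x)
    (hLip : ∀ x y, ‖g' x - g' y‖ ≤ L * ‖x - y‖)
    (ha0 : 0 ≤ a) (ha : a ≤ 1/20)
    (hη0 : 0 < η) (hη : η ≤ 1 / L)
    (horacle : ∀ x, ‖G x - g' x‖ ≤ a * ‖g' x‖ + b)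
    (y : ℕ → EuclideanSpace ℝ (Fin d))
    (hiter : ∀ t, y (t + 1) = y t - η • G (y t)) :
    ∀ t, g (y t) - g (y 0) ≤
      -(η * (1 - a) / 8) * ∑ i ∈ Finset.range t, ‖g' (y i)‖^2 + 5 * t * η * b^2 := by
  intro t
  have hηL : η * L ≤ 1 := by rwa [le_div_iff₀ hL] at hη
  have hstep (i : ℕ) : g (y (i + 1)) - g (y i) ≤
      -(η * (1 - a) / 8) * ‖g' (y i)‖ ^ 2 + 5 * η * b ^ 2 := by
    rw [hiter]
    exact sub_smul_le_of_inexact_gradient hgrad hLip hη0.le hηL ha0 ha (horacle _)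
  calc g (y t) - g (y 0)
      ≤ ∑ i ∈ range t, (-(η * (1 - a) / 8) * ‖g' (y i)‖ ^ 2 + 5 * η * b ^ 2) :=
        sub_le_sum_of_forall_succ_sub_le (u := fun i => g (y i)) hstep t
    _ = -(η * (1 - a) / 8) * ∑ i ∈ range t, ‖g' (y i)‖ ^ 2 + 5 * t * η * b ^ 2 := by
        rw [sum_add_distrib, ← mul_sum, sum_const, card_range, nsmul_eq_mul]
        ring

theorem inexact_descent_lemma {d : ℕ}
    (g : EuclideanSpace ℝ (Fin d) → ℝ) (g' G : EuclideanSpace ℝ (Fin d) → EuclideanSpace ℝ (Fin d))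
    (L a b η : ℝ) (hL : 0 < L)
    (hgrad : ∀ x, HasGradientAt g (g' x) x)
    (hLip : ∀ x y, ‖g' x - g' y‖ ≤ L * ‖x - y‖)
    (ha0 : 0 ≤ a) (ha : a ≤ 1/20) (hb : 0 ≤ b)
    (hη0 : 0 < η) (hη : η ≤ 1 / L)
    (horacle : ∀ x, ‖G x - g' x‖ ≤ a * ‖g' x‖ + b)
    (y : ℕ → EuclideanSpace ℝ (Fin d))
    (hiter : ∀ t, y (t + 1) = y t - η • G (y t)) :
    ∀ t, g (y t) - g (y 0) ≤
      -(η * (1 - a) / 8) * ∑ i ∈ Finset.range t, ‖g' (y i)‖^2 + 5 * t * η * b^2 :=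
  inexact_descent_lemma_general g g' G L a b η hL hgrad hLip ha0 ha hη0 hη horacle y hiter
end

section
/- Let g : R^d → R ∪ {∞} be α-strongly convex with minimizer x*, and let {g_x} be a family of convex models satisfying |g_x(y) - g(y)| ≤ (q/2)‖y - x‖² for all x, y. For θ > q, the iteration x_{k+1} = argmin_x { g_{x_k}(x) + (θ/2)‖x - x_k‖² } satisfies ‖x_{k+1} - x*‖ ≤ ((θ+q)/(α+θ))^{(k+1)/2} ‖x_0 - x*‖. -/
/-- `g` is `α`-strongly convex, with extended-real values. -/
def StrongConvexOnE {d : ℕ} (α : ℝ) (g : EuclideanSpace ℝ (Fin d) → EReal) : Prop :=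
  ∀ x y : EuclideanSpace ℝ (Fin d), ∀ s t : ℝ, 0 ≤ s → 0 ≤ t → s + t = 1 →
    g (s • x + t • y) + ((α/2 * s * t * ‖x - y‖^2 : ℝ) : EReal) ≤
      (s : EReal) * g x + (t : EReal) * g y

/-- `g` is convex, with extended-real values. -/
def ConvexOnE {d : ℕ} (g : EuclideanSpace ℝ (Fin d) → EReal) : Prop :=
  ∀ x y : EuclideanSpace ℝ (Fin d), ∀ s t : ℝ, 0 ≤ s → 0 ≤ t → s + t = 1 →
    g (s • x + t • y) ≤ (s : EReal) * g x + (t : EReal) * g y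

/-!
Write `a = x k`, `b = x (k + 1)` and `m = model a`. Strong convexity at the minimizer gives the
quadratic growth `g x* + α/2 ‖b - x*‖² ≤ g b`, and optimality of `b` for the convex function
`m + θ/2 ‖· - a‖²` gives the three-point inequality
`m b + θ/2 ‖b - a‖² + θ/2 ‖x* - b‖² ≤ m x* + θ/2 ‖x* - a‖²`.
Trading `g` for `m` at `b` and at `x*` costs `q/2 ‖b - a‖² + q/2 ‖x* - a‖²`; as `q ≤ θ` the
`‖b - a‖²` terms can be dropped, leaving `(α + θ) ‖b - x*‖² ≤ (θ + q) ‖a - x*‖²`.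
Iterating this contraction and taking square roots gives the rate.
-/

open Filter Topology Set RealInnerProductSpace

lemma le_of_forall_le_add_mul {a b c : ℝ} (h : ∀ t ∈ Ioc (0 : ℝ) 1, a ≤ b + t * c) : a ≤ b := by
  have hlim : Tendsto (fun t : ℝ => b + t * c) (𝓝[>] 0) (𝓝 b) := by
    have hcont : Continuous fun t : ℝ => b + t * c := by fun_prop
    exact (hcont.tendsto' 0 b (by simp)).mono_left nhdsWithin_le_nhds
  exact ge_of_tendsto hlim (eventually_of_mem (Ioc_mem_nhdsGT one_pos) h)

namespace EReal

lemma exists_eq_coe {x : EReal} (htop : x ≠ ⊤) (hbot : x ≠ ⊥) : ∃ r : ℝ, x = r :=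
  ⟨x.toReal, (coe_toReal htop hbot).symm⟩

lemma ne_bot_of_le_add_coe {a b : EReal} {c : ℝ} (ha : a ≠ ⊥) (h : a ≤ b + c) : b ≠ ⊥ := by
  rintro rfl
  exact ha (le_bot_iff.mp (by simpa using h))

lemma ne_top_of_add_coe_le {a b : EReal} {c : ℝ} (hb : b ≠ ⊤) (h : a + c ≤ b) : a ≠ ⊤ := by
  rintro rfl
  exact hb (top_le_iff.mp (by simpa using h))

end EReal

section

variable {d : ℕ}

lemma StrongConvexOnE.add_sq_norm_sub_le_of_forall_le {α : ℝ}
    {g : EuclideanSpace ℝ (Fin d) → EReal} (hsc : StrongConvexOnE α g) {xstar y : EuclideanSpace ℝ (Fin d)} (hmin : ∀ z, g xstar ≤ g z)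
    {Gs Gy : ℝ} (hs : g xstar = Gs) (hy : g y = Gy) :
    Gs + α / 2 * ‖y - xstar‖ ^ 2 ≤ Gy := by
  suffices h : α / 2 * ‖y - xstar‖ ^ 2 ≤ Gy - Gs by linarith
  refine le_of_forall_le_add_mul (c := α / 2 * ‖y - xstar‖ ^ 2) fun t ⟨ht0, ht1⟩ => ?_
  have hseg := (add_le_add (hmin ((1 - t) • xstar + t • y)) le_rfl).trans
    (hsc xstar y (1 - t) t (by linarith) ht0.le (by ring))
  rw [hs, hy, norm_sub_rev] at hseg
  norm_cast at hseg
  nlinarith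

lemma ConvexOnE.prox_three_point {θ : ℝ} {m : EuclideanSpace ℝ (Fin d) → EReal}
    (hm : ConvexOnE m) {a b z : EuclideanSpace ℝ (Fin d)}
    (hprox : ∀ w, m b + ((θ / 2 * ‖b - a‖ ^ 2 : ℝ) : EReal) ≤
      m w + ((θ / 2 * ‖w - a‖ ^ 2 : ℝ) : EReal))
    {Mb Mz : ℝ} (hb : m b = Mb) (hz : m z = Mz) :
    Mb + θ / 2 * ‖b - a‖ ^ 2 + θ / 2 * ‖z - b‖ ^ 2 ≤ Mz + θ / 2 * ‖z - a‖ ^ 2 := by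
  have hid : ‖z - a‖ ^ 2 = ‖b - a‖ ^ 2 + 2 * ⟪b - a, z - b⟫ + ‖z - b‖ ^ 2 := by
    rw [← norm_add_sq_real, sub_add_sub_cancel']
  suffices h : Mb - Mz ≤ θ * ⟪b - a, z - b⟫ by rw [hid]; linarith
  refine le_of_forall_le_add_mul (c := θ / 2 * ‖z - b‖ ^ 2) fun t ⟨ht0, ht1⟩ => ?_
  have hw : (1 - t) • b + t • z - a = (b - a) + t • (z - b) := by module
  have hseg := (hprox ((1 - t) • b + t • z)).trans
    (add_le_add (hm b z (1 - t) t (by linarith) ht0.le (by ring)) le_rfl)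
  rw [hb, hz, hw, norm_add_sq_real, real_inner_smul_right, norm_smul,
    Real.norm_of_nonneg ht0.le] at hseg
  norm_cast at hseg
  nlinarith

lemma le_sqrt_div_mul_of_mul_sq_le {c e u v : ℝ} (hc : 0 < c) (hv : 0 ≤ v)
    (h : c * u ^ 2 ≤ e * v ^ 2) : u ≤ √(e / c) * v := by
  rw [← Real.sqrt_sq hv, ← Real.sqrt_mul' _ (sq_nonneg v)]
  refine Real.le_sqrt_of_sq_le ?_
  rw [div_mul_eq_mul_div, le_div_iff₀ hc]
  linarith

lemma mul_sq_norm_sub_le_of_model_prox_step {α q θ : ℝ} (hqθ : q ≤ θ)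
    {g m : EuclideanSpace ℝ (Fin d) → EReal} (hsc : StrongConvexOnE α g) (hbot : ∀ y, g y ≠ ⊥)
    {xstar : EuclideanSpace ℝ (Fin d)} (hmin : ∀ z, g xstar ≤ g z) (hs : g xstar ≠ ⊤)
    (hm : ConvexOnE m) {a b : EuclideanSpace ℝ (Fin d)}
    (hacc : ∀ y, m y ≤ g y + ((q / 2 * ‖y - a‖ ^ 2 : ℝ) : EReal) ∧
        g y ≤ m y + ((q / 2 * ‖y - a‖ ^ 2 : ℝ) : EReal))
    (hprox : ∀ z, m b + ((θ / 2 * ‖b - a‖ ^ 2 : ℝ) : EReal) ≤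
      m z + ((θ / 2 * ‖z - a‖ ^ 2 : ℝ) : EReal)) :
    (α + θ) * ‖b - xstar‖ ^ 2 ≤ (θ + q) * ‖a - xstar‖ ^ 2 := by
  obtain ⟨Gs, hGs⟩ := EReal.exists_eq_coe hs (hbot xstar)
  have hMs_top : m xstar ≠ ⊤ :=
    ne_top_of_le_ne_top (EReal.add_ne_top hs (EReal.coe_ne_top _)) (hacc xstar).1
  obtain ⟨Ms, hMs⟩ :=
    EReal.exists_eq_coe hMs_top (EReal.ne_bot_of_le_add_coe (hbot xstar) (hacc xstar).2)
  have hMb_top : m b ≠ ⊤ :=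
    EReal.ne_top_of_add_coe_le (EReal.add_ne_top hMs_top (EReal.coe_ne_top _)) (hprox xstar)
  obtain ⟨Mb, hMb⟩ := EReal.exists_eq_coe hMb_top (EReal.ne_bot_of_le_add_coe (hbot b) (hacc b).2)
  have hGb_top : g b ≠ ⊤ :=
    ne_top_of_le_ne_top (EReal.add_ne_top hMb_top (EReal.coe_ne_top _)) (hacc b).2
  obtain ⟨Gb, hGb⟩ := EReal.exists_eq_coe hGb_top (hbot b)
  have hgrowth := hsc.add_sq_norm_sub_le_of_forall_le hmin hGs hGb
  have hthree := hm.prox_three_point hprox hMb hMs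
  have hGb_le : Gb ≤ Mb + q / 2 * ‖b - a‖ ^ 2 := by
    have h := (hacc b).2
    rw [hGb, hMb] at h
    exact_mod_cast h
  have hMs_le : Ms ≤ Gs + q / 2 * ‖xstar - a‖ ^ 2 := by
    have h := (hacc xstar).1
    rw [hGs, hMs] at h
    exact_mod_cast h
  rw [norm_sub_rev xstar b, norm_sub_rev xstar a] at hthree
  rw [norm_sub_rev xstar a] at hMs_le
  nlinarith [mul_nonneg (sub_nonneg.2 hqθ) (sq_nonneg ‖b - a‖)]

end

theorem two_sided_model_linear_convergence_general {d : ℕ} (α q θ : ℝ)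
    (hα : 0 < α) (hq : 0 ≤ q) (hθ : q < θ)
    (g : EuclideanSpace ℝ (Fin d) → EReal)
    (model : EuclideanSpace ℝ (Fin d) → EuclideanSpace ℝ (Fin d) → EReal)
    (hproper : (∀ x, g x ≠ ⊥) ∧ ∃ x, g x ≠ ⊤)
    (hsc : StrongConvexOnE α g)
    (xstar : EuclideanSpace ℝ (Fin d))
    (hmin : ∀ z, g xstar ≤ g z)
    (hmodel_convex : ∀ x, ConvexOnE (model x))
    (hmodel_acc : ∀ x y, model x y ≤ g y + ((q/2 * ‖y - x‖^2 : ℝ) : EReal) ∧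
        g y ≤ model x y + ((q/2 * ‖y - x‖^2 : ℝ) : EReal))
    (x : ℕ → EuclideanSpace ℝ (Fin d))
    (hiter : ∀ k, ∀ z,
      model (x k) (x (k+1)) + ((θ/2 * ‖x (k+1) - x k‖^2 : ℝ) : EReal) ≤
        model (x k) z + ((θ/2 * ‖z - x k‖^2 : ℝ) : EReal)) :
    ∀ k : ℕ, ‖x (k+1) - xstar‖ ≤
      ((θ + q)/(α + θ)) ^ (((k : ℝ) + 1)/2) * ‖x 0 - xstar‖ := by
  obtain ⟨hbot, x₀, hx₀⟩ := hproper
  have hs : g xstar ≠ ⊤ := ne_top_of_le_ne_top hx₀ (hmin x₀)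
  have hρ : 0 ≤ (θ + q) / (α + θ) := div_nonneg (by linarith) (by linarith)
  have hcontr (k : ℕ) : ‖x (k + 1) - xstar‖ ≤ √((θ + q) / (α + θ)) * ‖x k - xstar‖ :=
    le_sqrt_div_mul_of_mul_sq_le (by linarith) (norm_nonneg _)
      (mul_sq_norm_sub_le_of_model_prox_step hθ.le hsc hbot hmin hs (hmodel_convex (x k))
        (hmodel_acc (x k)) (hiter k))
  intro k
  calc ‖x (k + 1) - xstar‖ ≤ √((θ + q) / (α + θ)) ^ (k + 1) * ‖x 0 - xstar‖ :=
        le_geom (u := fun j => ‖x j - xstar‖) (Real.sqrt_nonneg _) (k + 1) fun j _ => hcontr j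
    _ = ((θ + q) / (α + θ)) ^ (((k : ℝ) + 1) / 2) * ‖x 0 - xstar‖ := by
        rw [Real.sqrt_eq_rpow, ← Real.rpow_natCast, ← Real.rpow_mul hρ]
        push_cast
        ring_nf

theorem two_sided_model_linear_convergence {d : ℕ} (α q θ : ℝ)
    (hα : 0 < α) (hq : 0 ≤ q) (hθ : q < θ)
    (g : EuclideanSpace ℝ (Fin d) → EReal)
    (model : EuclideanSpace ℝ (Fin d) → EuclideanSpace ℝ (Fin d) → EReal)
    (hproper : (∀ x, g x ≠ ⊥) ∧ ∃ x, g x ≠ ⊤)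
    (hclosed : LowerSemicontinuous g)
    (hsc : StrongConvexOnE α g)
    (xstar : EuclideanSpace ℝ (Fin d))
    (hmin : ∀ z, g xstar ≤ g z)
    (hmodel_convex : ∀ x, ConvexOnE (model x))
    (hmodel_acc : ∀ x y, model x y ≤ g y + ((q/2 * ‖y - x‖^2 : ℝ) : EReal) ∧
        g y ≤ model x y + ((q/2 * ‖y - x‖^2 : ℝ) : EReal))
    (x : ℕ → EuclideanSpace ℝ (Fin d))
    (hiter : ∀ k, ∀ z,
      model (x k) (x (k+1)) + ((θ/2 * ‖x (k+1) - x k‖^2 : ℝ) : EReal) ≤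
        model (x k) z + ((θ/2 * ‖z - x k‖^2 : ℝ) : EReal)) :
    ∀ k : ℕ, ‖x (k+1) - xstar‖ ≤
      ((θ + q)/(α + θ)) ^ (((k : ℝ) + 1)/2) * ‖x 0 - xstar‖ :=
  two_sided_model_linear_convergence_general α q θ hα hq hθ g model hproper hsc xstar hmin
    hmodel_convex hmodel_acc x hiter
end

section
/- One step of the two-sided model iteration contracts in the following sense: with g α-strongly convex with minimizer x*, g_{x_k} convex with |g_{x_k}(y) - g(y)| ≤ (q/2)‖y - x_k‖², θ > q, and x_{k+1} = argmin { g_{x_k}(x) + (θ/2)‖x - x_k‖² }, one has g(x_{k+1}) - g(x*) + (θ/2)‖x* - x_{k+1}‖² ≤ ((θ+q)/2)‖x* - x_k‖², and consequently ‖x_{k+1} - x*‖² ≤ ((θ+q)/(α+θ))‖x_k - x*‖². -/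
/-!
The regularized model `gₖ + (θ/2)‖· - xₖ‖²` is `θ`-strongly convex and minimized at `xₖ₊₁`,
so it grows quadratically away from `xₖ₊₁`; evaluating this at `x*` and trading `gₖ` for `g`
on both sides (an error of `(q/2)‖· - xₖ‖²` each time, the one at `xₖ₊₁` absorbed since
`q ≤ θ`) gives the first inequality. Quadratic growth of the `α`-strongly convex `g` away from
its minimizer `x*` bounds `g(xₖ₊₁) - g(x*)` below by `(α/2)‖xₖ₊₁ - x*‖²`, which gives the second.
-/

open Filter Topology

lemma norm_smul_add_smul_sub_sq {E : Type*} [NormedAddCommGroup E] [InnerProductSpace ℝ E]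
    (x y z : E) {s t : ℝ} (h : s + t = 1) :
    ‖s • x + t • y - z‖ ^ 2 = s * ‖x - z‖ ^ 2 + t * ‖y - z‖ ^ 2 - s * t * ‖x - y‖ ^ 2 := by
  have hz : s • x + t • y - z = s • (x - z) + t • (y - z) + (s + t - 1) • z := by module
  have hxy : x - y = (x - z) - (y - z) := by abel
  rw [hz, h, sub_self, zero_smul, add_zero, norm_add_sq_real, hxy, norm_sub_sq_real (x - z),
    norm_smul, norm_smul, real_inner_smul_left, real_inner_smul_right,
    Real.norm_eq_abs, Real.norm_eq_abs, mul_pow, mul_pow, sq_abs, sq_abs]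
  linear_combination (s * ‖x - z‖ ^ 2 + t * ‖y - z‖ ^ 2) * h

lemma le_of_forall_le_add_mul_s9 {A B K : ℝ} (h : ∀ t : ℝ, 0 < t → t ≤ 1 → A ≤ B + t * K) :
    A ≤ B := by
  have hlim : Tendsto (fun t : ℝ => B + t * K) (𝓝[>] 0) (𝓝 B) :=
    tendsto_nhdsWithin_of_tendsto_nhds <|
      (by fun_prop : Continuous fun t : ℝ => B + t * K).tendsto' 0 B (by simp)
  refine ge_of_tendsto hlim ?_
  filter_upwards [Ioc_mem_nhdsGT one_pos] with t ht using h t ht.1 ht.2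

variable {d : ℕ}

lemma ConvexOnE.strongConvexOnE_add_sq {f : EuclideanSpace ℝ (Fin d) → EReal}
    (hf : ConvexOnE f) (θ : ℝ) (c : EuclideanSpace ℝ (Fin d)) :
    StrongConvexOnE θ (fun z => f z + ((θ / 2 * ‖z - c‖ ^ 2 : ℝ) : EReal)) := by
  intro x y s t hs ht hst
  have hsq : θ / 2 * ‖s • x + t • y - c‖ ^ 2 + θ / 2 * s * t * ‖x - y‖ ^ 2 =
      s * (θ / 2 * ‖x - c‖ ^ 2) + t * (θ / 2 * ‖y - c‖ ^ 2) := by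
    rw [norm_smul_add_smul_sub_sq x y c hst]; ring
  rw [EReal.left_distrib_of_nonneg_of_ne_top (EReal.coe_nonneg.2 hs) (EReal.coe_ne_top s),
    EReal.left_distrib_of_nonneg_of_ne_top (EReal.coe_nonneg.2 ht) (EReal.coe_ne_top t),
    add_add_add_comm, add_assoc, ← EReal.coe_add, hsq, ← EReal.coe_mul, ← EReal.coe_mul,
    EReal.coe_add]
  exact add_le_add (hf x y s t hs ht hst) le_rfl

lemma StrongConvexOnE.add_sq_le_of_forall_le {μ : ℝ} {φ : EuclideanSpace ℝ (Fin d) → EReal}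
    (hφ : StrongConvexOnE μ φ) {x : EuclideanSpace ℝ (Fin d)} (hx : ∀ z, φ x ≤ φ z)
    (z : EuclideanSpace ℝ (Fin d)) :
    φ x + ((μ / 2 * ‖z - x‖ ^ 2 : ℝ) : EReal) ≤ φ z := by
  induction hφx : φ x using EReal.rec with
  | bot => simp
  | top =>
    have hz : ⊤ ≤ φ z := hφx ▸ hx z
    rw [top_le_iff.1 hz]
    exact le_top
  | coe a =>
    induction hφz : φ z using EReal.rec with
    | bot => simpa [hφx, hφz] using hx z
    | top => exact le_top
    | coe b =>
      rw [← EReal.coe_add, EReal.coe_le_coe_iff]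
      -- compare `φ x` with `φ` at `(1 - t) • x + t • z`, divide by `t` and let `t → 0⁺`
      refine le_of_forall_le_add_mul_s9 (K := μ / 2 * ‖z - x‖ ^ 2) fun t ht0 ht1 => ?_
      have hcomb := (add_le_add (hx ((1 - t) • x + t • z)) le_rfl).trans
        (hφ x z (1 - t) t (by linarith) ht0.le (by ring))
      rw [hφx, hφz, ← EReal.coe_mul, ← EReal.coe_mul, ← EReal.coe_add, ← EReal.coe_add,
        EReal.coe_le_coe_iff, norm_sub_rev x z] at hcomb
      nlinarith

theorem two_sided_model_one_step_contraction_general {d : ℕ} (α q θ : ℝ)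
    (hα : 0 < α) (hq : 0 ≤ q) (hθ : q < θ)
    (g gk : EuclideanSpace ℝ (Fin d) → EReal)
    (hproper : (∀ x, g x ≠ ⊥) ∧ ∃ x, g x ≠ ⊤)
    (hsc : StrongConvexOnE α g)
    (xstar : EuclideanSpace ℝ (Fin d))
    (hmin : ∀ z, g xstar ≤ g z)
    (hgk_convex : ConvexOnE gk)
    (xk xk1 : EuclideanSpace ℝ (Fin d))
    (hgk_acc : ∀ y, gk y ≤ g y + ((q/2 * ‖y - xk‖^2 : ℝ) : EReal) ∧
        g y ≤ gk y + ((q/2 * ‖y - xk‖^2 : ℝ) : EReal))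
    (hstep : ∀ z, gk xk1 + ((θ/2 * ‖xk1 - xk‖^2 : ℝ) : EReal) ≤
        gk z + ((θ/2 * ‖z - xk‖^2 : ℝ) : EReal)) :
    g xk1 + ((θ/2 * ‖xstar - xk1‖^2 : ℝ) : EReal) ≤
        g xstar + (((θ + q)/2 * ‖xstar - xk‖^2 : ℝ) : EReal) ∧
    ‖xk1 - xstar‖^2 ≤ (θ + q)/(α + θ) * ‖xk - xstar‖^2 := by
  have hdescent : g xk1 + ((θ / 2 * ‖xstar - xk1‖ ^ 2 : ℝ) : EReal) ≤
      g xstar + (((θ + q) / 2 * ‖xstar - xk‖ ^ 2 : ℝ) : EReal) := by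
    have hprox := (hgk_convex.strongConvexOnE_add_sq θ xk).add_sq_le_of_forall_le hstep xstar
    calc g xk1 + ((θ / 2 * ‖xstar - xk1‖ ^ 2 : ℝ) : EReal)
        ≤ gk xk1 + ((q / 2 * ‖xk1 - xk‖ ^ 2 : ℝ) : EReal) +
            ((θ / 2 * ‖xstar - xk1‖ ^ 2 : ℝ) : EReal) := add_le_add (hgk_acc xk1).2 le_rfl
      _ ≤ gk xk1 + ((θ / 2 * ‖xk1 - xk‖ ^ 2 : ℝ) : EReal) +
            ((θ / 2 * ‖xstar - xk1‖ ^ 2 : ℝ) : EReal) := by gcongr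
      _ ≤ gk xstar + ((θ / 2 * ‖xstar - xk‖ ^ 2 : ℝ) : EReal) := hprox
      _ ≤ g xstar + ((q / 2 * ‖xstar - xk‖ ^ 2 : ℝ) : EReal) +
            ((θ / 2 * ‖xstar - xk‖ ^ 2 : ℝ) : EReal) := add_le_add (hgk_acc xstar).1 le_rfl
      _ = g xstar + (((θ + q) / 2 * ‖xstar - xk‖ ^ 2 : ℝ) : EReal) := by
        rw [add_assoc, ← EReal.coe_add]
        ring_nf
  refine ⟨hdescent, ?_⟩
  obtain ⟨hbot, x₀, hx₀⟩ := hproper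
  have hG : g xstar = ((g xstar).toReal : EReal) :=
    (EReal.coe_toReal (ne_top_of_le_ne_top hx₀ (hmin x₀)) (hbot xstar)).symm
  have hcombined := (add_le_add (hsc.add_sq_le_of_forall_le hmin xk1) le_rfl).trans hdescent
  rw [hG, add_assoc, ← EReal.coe_add, ← EReal.coe_add, ← EReal.coe_add, EReal.coe_le_coe_iff,
    norm_sub_rev xstar xk1, norm_sub_rev xstar xk] at hcombined
  rw [div_mul_eq_mul_div, le_div_iff₀ (by linarith)]
  linarith

theorem two_sided_model_one_step_contraction {d : ℕ} (α q θ : ℝ)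
    (hα : 0 < α) (hq : 0 ≤ q) (hθ : q < θ)
    (g gk : EuclideanSpace ℝ (Fin d) → EReal)
    (hproper : (∀ x, g x ≠ ⊥) ∧ ∃ x, g x ≠ ⊤)
    (hclosed : LowerSemicontinuous g)
    (hsc : StrongConvexOnE α g)
    (xstar : EuclideanSpace ℝ (Fin d))
    (hmin : ∀ z, g xstar ≤ g z)
    (hgk_convex : ConvexOnE gk)
    (xk xk1 : EuclideanSpace ℝ (Fin d))
    (hgk_acc : ∀ y, gk y ≤ g y + ((q/2 * ‖y - xk‖^2 : ℝ) : EReal) ∧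
        g y ≤ gk y + ((q/2 * ‖y - xk‖^2 : ℝ) : EReal))
    (hstep : ∀ z, gk xk1 + ((θ/2 * ‖xk1 - xk‖^2 : ℝ) : EReal) ≤
        gk z + ((θ/2 * ‖z - xk‖^2 : ℝ) : EReal)) :
    g xk1 + ((θ/2 * ‖xstar - xk1‖^2 : ℝ) : EReal) ≤
        g xstar + (((θ + q)/2 * ‖xstar - xk‖^2 : ℝ) : EReal) ∧
    ‖xk1 - xstar‖^2 ≤ (θ + q)/(α + θ) * ‖xk - xstar‖^2 :=
  two_sided_model_one_step_contraction_general α q θ hα hq hθ g gk hproper hsc xstar hmin hgk_convex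
    xk xk1 hgk_acc hstep
end

section
/- Let h : R^m → R be L-Lipschitz, and c : R^d → R^m be C¹ with β-Lipschitz Jacobian on a convex set D. Then for all x, y ∈ D, |h(c(y)) - h(c(x) + ∇c(x)(y - x))| ≤ (βL/2)‖x - y‖². Hence the prox-linear model y ↦ h(c(x) + ∇c(x)(y-x)) is a two-sided model with parameter q = βL. -/
open Set

/-! Along the segment `t ↦ x + t • (y - x)` the remainder `f (x + t • v) - (f x + t • f' x v)`
vanishes at `t = 0` and has derivative `(f' (x + t • v) - f' x) v`, of norm at most `β ‖v‖² t`;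
comparing with `β ‖v‖² t² / 2` bounds the remainder at `t = 1`. Composing with the
`L`-Lipschitz `h` multiplies the bound by `L`. -/

section TaylorRemainder

variable {E F : Type*} [NormedAddCommGroup E] [NormedSpace ℝ E]
  [NormedAddCommGroup F] [NormedSpace ℝ F]

theorem hasDerivAt_remainder_along_segment {f : E → F} {A : E →L[ℝ] F} {x v : E} {t : ℝ}
    (hf : HasFDerivAt f A (x + t • v)) (B : E →L[ℝ] F) :
    HasDerivAt (fun τ : ℝ => f (x + τ • v) - (f x + τ • B v)) ((A - B) v) t := by
  have hline : HasDerivAt (fun τ : ℝ => x + τ • v) v t := by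
    simpa using ((hasDerivAt_id t).smul_const v).const_add x
  have hlin : HasDerivAt (fun τ : ℝ => f x + τ • B v) (B v) t := by
    simpa using ((hasDerivAt_id t).smul_const (B v)).const_add (f x)
  exact (hf.comp_hasDerivAt t hline).sub hlin |>.congr_deriv (sub_apply _ _ _).symm

theorem Convex.norm_image_sub_add_fderiv_le {f : E → F} {f' : E → E →L[ℝ] F} {s : Set E}
    {β : ℝ} (hs : Convex ℝ s) (hf : ∀ x ∈ s, HasFDerivAt f (f' x) x)
    (hf' : ∀ u ∈ s, ∀ v ∈ s, ‖f' u - f' v‖ ≤ β * ‖u - v‖) {x y : E} (hx : x ∈ s)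
    (hy : y ∈ s) : ‖f y - (f x + f' x (y - x))‖ ≤ β / 2 * ‖y - x‖ ^ 2 := by
  set v := y - x
  have hmem : ∀ t ∈ Icc (0 : ℝ) 1, x + t • v ∈ s := fun t ht => hs.add_smul_sub_mem hx hy ht
  have hderiv : ∀ t ∈ Icc (0 : ℝ) 1, HasDerivAt (fun τ : ℝ => f (x + τ • v) - (f x + τ • f' x v))
      ((f' (x + t • v) - f' x) v) t :=
    fun t ht => hasDerivAt_remainder_along_segment (hf _ (hmem t ht)) (f' x)
  have hbound : ∀ t ∈ Ico (0 : ℝ) 1, ‖(f' (x + t • v) - f' x) v‖ ≤ β * ‖v‖ ^ 2 * t := by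
    intro t ht
    calc ‖(f' (x + t • v) - f' x) v‖ ≤ ‖f' (x + t • v) - f' x‖ * ‖v‖ :=
          (f' (x + t • v) - f' x).le_opNorm v
      _ ≤ β * ‖x + t • v - x‖ * ‖v‖ := by
          gcongr
          exact hf' _ (hmem t (Ico_subset_Icc_self ht)) _ hx
      _ = β * ‖v‖ ^ 2 * t := by
          rw [add_sub_cancel_left, norm_smul, Real.norm_of_nonneg ht.1]; ring
  have hB : ∀ t : ℝ, HasDerivAt (fun t => β * ‖v‖ ^ 2 / 2 * t ^ 2) (β * ‖v‖ ^ 2 * t) t :=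
    fun t => ((hasDerivAt_pow 2 t).const_mul (β * ‖v‖ ^ 2 / 2)).congr_deriv (by ring)
  have key := image_norm_le_of_norm_deriv_right_le_deriv_boundary
    (fun t ht => (hderiv t ht).continuousAt.continuousWithinAt)
    (fun t ht => (hderiv t (Ico_subset_Icc_self ht)).hasDerivWithinAt)
    (by simp) hB hbound (right_mem_Icc.mpr zero_le_one)
  simpa [v, div_mul_eq_mul_div] using key

end TaylorRemainder

theorem prox_linear_two_sided_model_general {d m : ℕ} (L β : ℝ) (hL : 0 ≤ L)
    (D : Set (EuclideanSpace ℝ (Fin d))) (hD : Convex ℝ D)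
    (h : EuclideanSpace ℝ (Fin m) → ℝ)
    (hLip : ∀ u v, |h u - h v| ≤ L * ‖u - v‖)
    (c : EuclideanSpace ℝ (Fin d) → EuclideanSpace ℝ (Fin m))
    (c' : EuclideanSpace ℝ (Fin d) → (EuclideanSpace ℝ (Fin d) →L[ℝ] EuclideanSpace ℝ (Fin m)))
    (hderiv : ∀ x ∈ D, HasFDerivAt c (c' x) x)
    (hJacLip : ∀ u ∈ D, ∀ v ∈ D, ‖c' u - c' v‖ ≤ β * ‖u - v‖) :
    ∀ x ∈ D, ∀ y ∈ D,
      |h (c y) - h (c x + c' x (y - x))| ≤ β * L / 2 * ‖x - y‖^2 := by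
  intro x hx y hy
  calc |h (c y) - h (c x + c' x (y - x))| ≤ L * ‖c y - (c x + c' x (y - x))‖ := hLip _ _
    _ ≤ L * (β / 2 * ‖y - x‖ ^ 2) :=
        mul_le_mul_of_nonneg_left (hD.norm_image_sub_add_fderiv_le hderiv hJacLip hx hy) hL
    _ = β * L / 2 * ‖x - y‖ ^ 2 := by rw [norm_sub_rev]; ring

theorem prox_linear_two_sided_model {d m : ℕ} (L β : ℝ) (hL : 0 ≤ L) (hβ : 0 ≤ β)
    (D : Set (EuclideanSpace ℝ (Fin d))) (hD : Convex ℝ D)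
    (h : EuclideanSpace ℝ (Fin m) → ℝ)
    (hLip : ∀ u v, |h u - h v| ≤ L * ‖u - v‖)
    (c : EuclideanSpace ℝ (Fin d) → EuclideanSpace ℝ (Fin m))
    (c' : EuclideanSpace ℝ (Fin d) → (EuclideanSpace ℝ (Fin d) →L[ℝ] EuclideanSpace ℝ (Fin m)))
    (hderiv : ∀ x ∈ D, HasFDerivAt c (c' x) x)
    (hJacLip : ∀ u ∈ D, ∀ v ∈ D, ‖c' u - c' v‖ ≤ β * ‖u - v‖) :
    ∀ x ∈ D, ∀ y ∈ D,
      |h (c y) - h (c x + c' x (y - x))| ≤ β * L / 2 * ‖x - y‖^2 :=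
  prox_linear_two_sided_model_general L β hL D hD h hLip c c' hderiv hJacLip
end

section
/- Suppose g is C² on B_r(x) with L₂-Lipschitz Hessian there, ‖∇g(x)‖ ≤ ε₁, λ_min(∇²g(x)) ≥ -ε₂, and r = 3ε₂/(2L₂). Then for all y ∈ B_r(x): g(y) ≥ g(x) + ⟨∇g(x), y - x⟩ - (3/4)ε₂‖y - x‖². -/
/-!
Restrict `g` to the segment `t ↦ x + t • (y - x)`. Along it the second derivative is
`⟪H (x + t • v) v, v⟫ ≥ ⟪H x v, v⟫ - L₂ t ‖v‖³`, and integrating this bound twice gives the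
cubic Taylor bound `g y ≥ g x + ⟪g' x, v⟫ + ⟪H x v, v⟫ / 2 - L₂ ‖v‖³ / 6` with `v = y - x`.
The curvature hypothesis bounds the quadratic term by `-ε₂ ‖v‖² / 2`, and on the ball of radius
`r = 3 ε₂ / (2 L₂)` the cubic term is at most `ε₂ ‖v‖² / 4`.
-/

open Set
open scoped RealInnerProductSpace

theorem sub_le_sub_of_hasDerivWithinAt_le {f g f' g' : ℝ → ℝ} {a b t : ℝ}
    (hf : ∀ s ∈ Icc a b, HasDerivWithinAt f (f' s) (Icc a b) s)
    (hg : ∀ s ∈ Icc a b, HasDerivWithinAt g (g' s) (Icc a b) s)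
    (hle : ∀ s ∈ Ioo a b, g' s ≤ f' s) (ht : t ∈ Icc a b) :
    g t - g a ≤ f t - f a := by
  have hmono : MonotoneOn (f - g) (Icc a b) := by
    refine monotoneOn_of_hasDerivWithinAt_nonneg (convex_Icc a b) (f' := f' - g')
      (fun s hs ↦ ((hf s hs).sub (hg s hs)).continuousWithinAt) (fun s hs ↦ ?_) (fun s hs ↦ ?_)
    · rw [interior_Icc] at hs ⊢
      exact ((hf s (Ioo_subset_Icc_self hs)).sub (hg s (Ioo_subset_Icc_self hs))).mono
        Ioo_subset_Icc_self
    · rw [interior_Icc] at hs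
      exact sub_nonneg.2 (hle s hs)
  have := hmono (left_mem_Icc.2 (ht.1.trans ht.2)) ht ht.1
  simp only [Pi.sub_apply] at this
  linarith

theorem cubic_taylor_lower_bound_of_second_deriv_ge {φ φ' φ'' : ℝ → ℝ} {a b : ℝ}
    (hφ : ∀ t ∈ Icc (0 : ℝ) 1, HasDerivWithinAt φ (φ' t) (Icc 0 1) t)
    (hφ' : ∀ t ∈ Icc (0 : ℝ) 1, HasDerivWithinAt φ' (φ'' t) (Icc 0 1) t)
    (hφ'' : ∀ t ∈ Ioo (0 : ℝ) 1, a - b * t ≤ φ'' t) :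
    φ 0 + φ' 0 + a / 2 - b / 6 ≤ φ 1 := by
  have hslope (t : ℝ) (ht : t ∈ Icc (0 : ℝ) 1) : φ' 0 + a * t - b * (t ^ 2 / 2) ≤ φ' t := by
    have := sub_le_sub_of_hasDerivWithinAt_le hφ' (g := fun t ↦ a * t - b * (t ^ 2 / 2))
      (fun s _ ↦ ((hasDerivAt_id' s).const_mul a |>.fun_sub
        ((hasDerivAt_pow 2 s).div_const 2 |>.const_mul b)).hasDerivWithinAt.congr_deriv
        (by push_cast; ring)) hφ'' ht
    linarith
  have := sub_le_sub_of_hasDerivWithinAt_le hφ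
    (g := fun t ↦ φ' 0 * t + a * (t ^ 2 / 2) - b * (t ^ 3 / 6))
    (fun s _ ↦ ((hasDerivAt_id' s).const_mul (φ' 0) |>.fun_add
      ((hasDerivAt_pow 2 s).div_const 2 |>.const_mul a) |>.fun_sub
      ((hasDerivAt_pow 3 s).div_const 6 |>.const_mul b)).hasDerivWithinAt.congr_deriv
      (by push_cast; ring))
    (fun t ht ↦ hslope t (Ioo_subset_Icc_self ht)) (right_mem_Icc.2 zero_le_one)
  norm_num at this
  linarith

section Segment

variable {E F : Type*} [NormedAddCommGroup E] [InnerProductSpace ℝ E]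
  [NormedAddCommGroup F] [NormedSpace ℝ F]

theorem HasFDerivWithinAt.hasDerivWithinAt_add_smul {f : E → F} {f' : E →L[ℝ] F} {s : Set E}
    {I : Set ℝ} {x v : E} {t : ℝ} (hf : HasFDerivWithinAt f f' s (x + t • v))
    (hI : MapsTo (fun t : ℝ ↦ x + t • v) I s) :
    HasDerivWithinAt (fun t ↦ f (x + t • v)) (f' v) I t := by
  simpa [Function.comp_def] using hf.comp_hasDerivWithinAt t
    (((hasDerivAt_id' t).smul_const v).const_add x).hasDerivWithinAt hI

theorem inner_apply_self_le_add_opNorm_sub_mul (A B : E →L[ℝ] E) (v : E) :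
    ⟪A v, v⟫ ≤ ⟪B v, v⟫ + ‖A - B‖ * ‖v‖ ^ 2 := by
  have : ⟪(A - B) v, v⟫ ≤ ‖A - B‖ * ‖v‖ ^ 2 :=
    calc ⟪(A - B) v, v⟫ ≤ ‖(A - B) v‖ * ‖v‖ := real_inner_le_norm _ _
      _ ≤ ‖A - B‖ * ‖v‖ * ‖v‖ := by gcongr; exact (A - B).le_opNorm v
      _ = ‖A - B‖ * ‖v‖ ^ 2 := by ring
  rw [sub_apply, inner_sub_left] at this
  linarith

variable [CompleteSpace E]

theorem cubic_taylor_lower_bound_of_hessian_lipschitz {g : E → ℝ} {g' : E → E}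
    {H : E → E →L[ℝ] E} {s : Set E} {x y : E} {L : ℝ} (hs : Convex ℝ s) (hx : x ∈ s)
    (hy : y ∈ s) (hgrad : ∀ z ∈ s, HasGradientWithinAt g (g' z) s z)
    (hhess : ∀ z ∈ s, HasFDerivWithinAt g' (H z) s z)
    (hHLip : ∀ z ∈ s, ‖H z - H x‖ ≤ L * ‖z - x‖) :
    g x + ⟪g' x, y - x⟫ + ⟪H x (y - x), y - x⟫ / 2 - L / 6 * ‖y - x‖ ^ 3 ≤ g y := by
  set v := y - x
  have hseg : MapsTo (fun t : ℝ ↦ x + t • v) (Icc 0 1) s := fun t ht ↦ hs.add_smul_sub_mem hx hy ht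
  have hderiv (t : ℝ) (ht : t ∈ Icc (0 : ℝ) 1) :
      HasDerivWithinAt (fun t ↦ g (x + t • v)) ⟪g' (x + t • v), v⟫ (Icc 0 1) t := by
    simpa using (hgrad _ (hseg ht)).hasFDerivWithinAt.hasDerivWithinAt_add_smul hseg
  have hderiv₂ (t : ℝ) (ht : t ∈ Icc (0 : ℝ) 1) :
      HasDerivWithinAt (fun t ↦ ⟪g' (x + t • v), v⟫) ⟪H (x + t • v) v, v⟫ (Icc 0 1) t := by
    simpa using ((hhess _ (hseg ht)).hasDerivWithinAt_add_smul hseg).inner ℝ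
      (hasDerivWithinAt_const t _ v)
  have hderiv₂_lower (t : ℝ) (ht : t ∈ Ioo (0 : ℝ) 1) :
      ⟪H x v, v⟫ - L * ‖v‖ ^ 3 * t ≤ ⟪H (x + t • v) v, v⟫ := by
    have hHt : ‖H (x + t • v) - H x‖ ≤ L * t * ‖v‖ := by
      simpa [norm_smul, abs_of_pos ht.1, mul_assoc] using
        hHLip _ (hseg (Ioo_subset_Icc_self ht))
    have := inner_apply_self_le_add_opNorm_sub_mul (H x) (H (x + t • v)) v
    rw [← norm_neg, neg_sub] at this
    nlinarith [sq_nonneg ‖v‖]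
  have key := cubic_taylor_lower_bound_of_second_deriv_ge hderiv hderiv₂ hderiv₂_lower
  simp only [zero_smul, add_zero, one_smul, v, add_sub_cancel] at key
  linarith

end Segment

theorem quadratic_lower_bound_at_second_order_point_general {d : ℕ} (L₂ ε₂ : ℝ)
    (hL₂ : 0 < L₂)
    (x : EuclideanSpace ℝ (Fin d)) (r : ℝ) (hr : r = 3 * ε₂ / (2 * L₂))
    (g : EuclideanSpace ℝ (Fin d) → ℝ)
    (g' : EuclideanSpace ℝ (Fin d) → EuclideanSpace ℝ (Fin d))
    (H : EuclideanSpace ℝ (Fin d) → (EuclideanSpace ℝ (Fin d) →L[ℝ] EuclideanSpace ℝ (Fin d)))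
    (hgrad : ∀ y ∈ Metric.closedBall x r,
      HasGradientWithinAt g (g' y) (Metric.closedBall x r) y)
    (hhess : ∀ y ∈ Metric.closedBall x r,
      HasFDerivWithinAt g' (H y) (Metric.closedBall x r) y)
    (hHLip : ∀ u ∈ Metric.closedBall x r, ∀ v ∈ Metric.closedBall x r,
      ‖H u - H v‖ ≤ L₂ * ‖u - v‖)
    (hcurv : ∀ v : EuclideanSpace ℝ (Fin d), inner ℝ (H x v) v ≥ -ε₂ * ‖v‖^2) :
    ∀ y ∈ Metric.closedBall x r,
      g y ≥ g x + inner ℝ (g' x) (y - x) - (3/4) * ε₂ * ‖y - x‖^2 := by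
  intro y hy
  have hx : x ∈ Metric.closedBall x r := Metric.mem_closedBall_self (dist_nonneg.trans hy)
  have htaylor := cubic_taylor_lower_bound_of_hessian_lipschitz
    (convex_closedBall x r) hx hy hgrad hhess (fun z hz ↦ hHLip z hz x hx)
  have hcubic : L₂ / 6 * ‖y - x‖ ^ 3 ≤ ε₂ / 4 * ‖y - x‖ ^ 2 := by
    have hLr : L₂ * ‖y - x‖ ≤ 3 * ε₂ / 2 := by
      calc L₂ * ‖y - x‖ ≤ L₂ * r := by gcongr; rwa [← dist_eq_norm]
        _ = 3 * ε₂ / 2 := by rw [hr]; field_simp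
    nlinarith [sq_nonneg ‖y - x‖]
  linarith [hcurv (y - x)]

theorem quadratic_lower_bound_at_second_order_point {d : ℕ} (L₂ ε₁ ε₂ : ℝ)
    (hL₂ : 0 < L₂) (hε₁ : 0 < ε₁) (hε₂ : 0 < ε₂)
    (x : EuclideanSpace ℝ (Fin d)) (r : ℝ) (hr : r = 3 * ε₂ / (2 * L₂))
    (g : EuclideanSpace ℝ (Fin d) → ℝ)
    (g' : EuclideanSpace ℝ (Fin d) → EuclideanSpace ℝ (Fin d))
    (H : EuclideanSpace ℝ (Fin d) → (EuclideanSpace ℝ (Fin d) →L[ℝ] EuclideanSpace ℝ (Fin d)))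
    (hgrad : ∀ y ∈ Metric.closedBall x r,
      HasGradientWithinAt g (g' y) (Metric.closedBall x r) y)
    (hhess : ∀ y ∈ Metric.closedBall x r,
      HasFDerivWithinAt g' (H y) (Metric.closedBall x r) y)
    (hHLip : ∀ u ∈ Metric.closedBall x r, ∀ v ∈ Metric.closedBall x r,
      ‖H u - H v‖ ≤ L₂ * ‖u - v‖)
    (hgradsmall : ‖g' x‖ ≤ ε₁)
    (hcurv : ∀ v : EuclideanSpace ℝ (Fin d), inner ℝ (H x v) v ≥ -ε₂ * ‖v‖^2) :
    ∀ y ∈ Metric.closedBall x r,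
      g y ≥ g x + inner ℝ (g' x) (y - x) - (3/4) * ε₂ * ‖y - x‖^2 :=
  quadratic_lower_bound_at_second_order_point_general L₂ ε₂ hL₂ x r hr g g' H hgrad hhess hHLip
    hcurv
end
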